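/- arXiv:2209.12324 — 3 statements merged into one kernel-verified Lean document; each statement's English description precedes it below -/
import Mathlib

section
/- Consider the Markov chain Q(t+1) = Q(t) + A_1(t) - A_2(t) - D_1(t) + D_2(t) on ℤ, where A_1, A_2 are i.i.d. integer-valued with means μ_1, μ_2 and finite second moments, D_1(t) ~ Bin(Q(t)^+, γ_1), D_2(t) ~ Bin(Q(t)^-, γ_2), with γ_1, γ_2 ∈ (0,1]. Then for the Lyapunov function L(q) = |q| the one-step drift satisfies E[L(Q(t+1)) - L(Q(t)) | Q(t) = q] ≤ (μ_1 + μ_2 - γ_1 |q|) if q ≥ 0 and ≤ (μ_1 + μ_2 - γ_2 |q|) if q < 0; in particular the drift is at most -ε whenever |q| ≥ (μ_1 + μ_2 + ε)/min(γ_1, γ_2). -/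
open MeasureTheory

/-- One-step Lyapunov drift bound for the two-way matching chain with abandonments on both
sides: conditionally on `Q(t) = q`, with binomial abandonments (so `E[D_1] = γ_1 q⁺`,
`0 ≤ D_1 ≤ q⁺`, and `E[D_2] = γ_2 q⁻`, `0 ≤ D_2 ≤ q⁻`), for `L(q) = |q|` the drift is at
most `μ_1 + μ_2 - γ_1 |q|` if `q ≥ 0` and at most `μ_1 + μ_2 - γ_2 |q|` if `q < 0`;
in particular it is at most `-ε` whenever `|q| ≥ (μ_1 + μ_2 + ε) / min(γ_1, γ_2)`. -/
theorem stmt2 {Ω : Type*} [MeasurableSpace Ω] {ℙ : Measure Ω} [IsProbabilityMeasure ℙ]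
    (q : ℤ) (μ1 μ2 γ1 γ2 ε : ℝ)
    (hγ1 : γ1 ∈ Set.Ioc (0:ℝ) 1) (hγ2 : γ2 ∈ Set.Ioc (0:ℝ) 1) (hε : 0 < ε)
    (A1 A2 D1 D2 : Ω → ℝ)
    (hA1int : Integrable A1 ℙ) (hA2int : Integrable A2 ℙ)
    (hD1int : Integrable D1 ℙ) (hD2int : Integrable D2 ℙ)
    (hA1nn : ∀ ω, 0 ≤ A1 ω) (hA2nn : ∀ ω, 0 ≤ A2 ω)
    (hA1 : ∫ ω, A1 ω ∂ℙ = μ1) (hA2 : ∫ ω, A2 ω ∂ℙ = μ2)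
    (hD1b : ∀ ω, 0 ≤ D1 ω ∧ D1 ω ≤ max (q : ℝ) 0)
    (hD2b : ∀ ω, 0 ≤ D2 ω ∧ D2 ω ≤ max (-(q : ℝ)) 0)
    (hD1 : ∫ ω, D1 ω ∂ℙ = γ1 * max (q : ℝ) 0)
    (hD2 : ∫ ω, D2 ω ∂ℙ = γ2 * max (-(q : ℝ)) 0) :
    ((∫ ω, |(q : ℝ) + A1 ω - A2 ω - D1 ω + D2 ω| ∂ℙ) - |(q : ℝ)|
        ≤ if 0 ≤ q then μ1 + μ2 - γ1 * |(q : ℝ)| else μ1 + μ2 - γ2 * |(q : ℝ)|)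
    ∧ ((μ1 + μ2 + ε) / min γ1 γ2 ≤ |(q : ℝ)| →
        (∫ ω, |(q : ℝ) + A1 ω - A2 ω - D1 ω + D2 ω| ∂ℙ) - |(q : ℝ)| ≤ -ε) := by
  obtain ⟨hγ1p, hγ11⟩ := hγ1
  obtain ⟨hγ2p, hγ21⟩ := hγ2
  have hμ1 : 0 ≤ μ1 := hA1 ▸ integral_nonneg hA1nn
  have hμ2 : 0 ≤ μ2 := hA2 ▸ integral_nonneg hA2nn
  have hint : Integrable (fun ω => |(q:ℝ) + A1 ω - A2 ω - D1 ω + D2 ω|) ℙ :=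
    (((((integrable_const _).add hA1int).sub hA2int).sub hD1int).add hD2int).abs
  have key : (∫ ω, |(q : ℝ) + A1 ω - A2 ω - D1 ω + D2 ω| ∂ℙ) - |(q : ℝ)|
      ≤ if 0 ≤ q then μ1 + μ2 - γ1 * |(q : ℝ)| else μ1 + μ2 - γ2 * |(q : ℝ)| := by
    by_cases hq : 0 ≤ q
    · simp only [hq, if_true]
      have hq' : (0:ℝ) ≤ (q:ℝ) := by exact_mod_cast hq
      have hmax : max (q:ℝ) 0 = (q:ℝ) := max_eq_left hq'
      have hmax2 : max (-(q:ℝ)) 0 = 0 := max_eq_right (by linarith)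
      have hD2z : ∀ ω, D2 ω = 0 := fun ω =>
        le_antisymm (by simpa [hmax2] using (hD2b ω).2) (hD2b ω).1
      have hpt : ∀ ω, |(q : ℝ) + A1 ω - A2 ω - D1 ω + D2 ω|
          ≤ (q:ℝ) + A1 ω + A2 ω - D1 ω := by
        intro ω
        have h1 := (hD1b ω).1
        have h2 := (hD1b ω).2
        rw [hmax] at h2
        have h3 := hA1nn ω; have h4 := hA2nn ω
        rw [abs_le]; constructor <;> simp only [hD2z ω] <;> linarith
      have h2 : (∫ ω, |(q : ℝ) + A1 ω - A2 ω - D1 ω + D2 ω| ∂ℙ)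
          ≤ ∫ ω, ((q:ℝ) + A1 ω + A2 ω - D1 ω) ∂ℙ :=
        integral_mono hint ((((integrable_const _).add hA1int).add hA2int).sub hD1int) hpt
      have h3 : ∫ ω, ((q:ℝ) + A1 ω + A2 ω - D1 ω) ∂ℙ = (q:ℝ) + μ1 + μ2 - γ1 * (q:ℝ) := by
        have hIa : Integrable (fun ω => (q:ℝ) + A1 ω) ℙ := (integrable_const _).add hA1int
        have hIb : Integrable (fun ω => (q:ℝ) + A1 ω + A2 ω) ℙ := hIa.add hA2int
        rw [integral_sub hIb hD1int, integral_add hIa hA2int,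
            integral_add (integrable_const _) hA1int, integral_const]
        simp [hA1, hA2, hD1, hmax]
      rw [abs_of_nonneg hq']
      linarith
    · simp only [hq, if_false]
      have hq' : (q:ℝ) < 0 := by exact_mod_cast (lt_of_not_ge hq)
      have hmax : max (-(q:ℝ)) 0 = -(q:ℝ) := max_eq_left (by linarith)
      have hmax2 : max ((q:ℝ)) 0 = 0 := max_eq_right (le_of_lt hq')
      have hD1z : ∀ ω, D1 ω = 0 := fun ω =>
        le_antisymm (by simpa [hmax2] using (hD1b ω).2) (hD1b ω).1
      have hpt : ∀ ω, |(q : ℝ) + A1 ω - A2 ω - D1 ω + D2 ω|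
          ≤ -(q:ℝ) + A1 ω + A2 ω - D2 ω := by
        intro ω
        have h1 := (hD2b ω).1
        have h2 := (hD2b ω).2
        rw [hmax] at h2
        have h3 := hA1nn ω; have h4 := hA2nn ω
        rw [abs_le]; constructor <;> simp only [hD1z ω] <;> linarith
      have h2 : (∫ ω, |(q : ℝ) + A1 ω - A2 ω - D1 ω + D2 ω| ∂ℙ)
          ≤ ∫ ω, (-(q:ℝ) + A1 ω + A2 ω - D2 ω) ∂ℙ :=
        integral_mono hint ((((integrable_const _).add hA1int).add hA2int).sub hD2int) hpt
      have h3 : ∫ ω, (-(q:ℝ) + A1 ω + A2 ω - D2 ω) ∂ℙ = -(q:ℝ) + μ1 + μ2 - γ2 * (-(q:ℝ)) := by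
        have hIa : Integrable (fun ω => -(q:ℝ) + A1 ω) ℙ := (integrable_const _).add hA1int
        have hIb : Integrable (fun ω => -(q:ℝ) + A1 ω + A2 ω) ℙ := hIa.add hA2int
        rw [integral_sub hIb hD2int, integral_add hIa hA2int,
            integral_add (integrable_const _) hA1int, integral_const]
        simp [hA1, hA2, hD2, hmax]
      rw [abs_of_neg hq']
      linarith
  refine ⟨key, fun h => ?_⟩
  have hm : 0 < min γ1 γ2 := lt_min hγ1p hγ2p
  have h' : μ1 + μ2 + ε ≤ min γ1 γ2 * |(q:ℝ)| := by
    rw [div_le_iff₀ hm] at h; linarith [h]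
  have hg1 : min γ1 γ2 * |(q:ℝ)| ≤ γ1 * |(q:ℝ)| :=
    mul_le_mul_of_nonneg_right (min_le_left _ _) (abs_nonneg _)
  have hg2 : min γ1 γ2 * |(q:ℝ)| ≤ γ2 * |(q:ℝ)| :=
    mul_le_mul_of_nonneg_right (min_le_right _ _) (abs_nonneg _)
  by_cases hq : 0 ≤ q <;> simp only [hq, if_true, if_false] at key <;> linarith
end

section
/- Let n: [0,∞) → ℝ_+^2 be Lipschitz, with n_1(0) + n_2(0) > 0, and suppose at almost every t: (i) if n_1(t) > 0 and n_2(t) > 0 then n_1'(t) + n_2'(t) = λ_1 + λ_2 - C_{1,2}; (ii) if n_i(t) > 0 = n_j(t) then n_i'(t) + n_j'(t) ≤ max{λ_1 - C_1, λ_2 - C_2} and once n_j hits 0 it stays at 0; (iii) if n_1(t) = n_2(t) = 0 then n'(t) = 0. Assume λ_1 + λ_2 < C_{1,2}, λ_1 < C_1, and λ_2 < C_2. Then there is a constant B, independent of the initial condition, such that n_1(t) = n_2(t) = 0 for all t ≥ B (n_1(0) + n_2(0)). One can take B = 1/(C_{1,2} - λ_1 - λ_2) + (1 + max{λ_1 -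 C̲_1, λ_2 - C̲_2}/(C_{1,2} - λ_1 - λ_2)) / min{C_1 - λ_1, C_2 - λ_2}, assuming additionally that each coordinate's derivative is bounded below by λ_i - C̄_i ≥ λ_i - C_{1,2} while both are positive. -/
/-!
While `n₁ + n₂` is positive it decreases at rate at least `δ = min a m`, where
`a = C_{1,2} - λ₁ - λ₂` and `m = min {C₁ - λ₁, C₂ - λ₂}`, whichever of the regimes (i), (ii)
applies. Being Lipschitz, hence absolutely continuous, the sum therefore vanishes by time
`(n₁(0) + n₂(0)) / δ`, and both coordinates stay at zero afterwards. Finally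
`B = (a + m + M) / (a m)` with `M = max {λ₁ - C̲₁, λ₂ - C̲₂}`, and `a + M`, `m + M` are
nonnegative, so `1 / δ = max {1 / a, 1 / m} ≤ B`.
-/

open Set MeasureTheory

theorem AbsolutelyContinuousOnInterval.sub_le_mul_of_ae_deriv_le {f : ℝ → ℝ} {a b c : ℝ}
    (hf : AbsolutelyContinuousOnInterval f a b) (hab : a ≤ b)
    (hd : ∀ᵐ t, t ∈ Icc a b → deriv f t ≤ c) :
    f b - f a ≤ c * (b - a) := by
  rw [← hf.integral_deriv_eq_sub, mul_comm, ← smul_eq_mul, ← intervalIntegral.integral_const]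
  exact intervalIntegral.integral_mono_ae_restrict hab hf.intervalIntegrable_deriv
    intervalIntegrable_const ((ae_restrict_iff' measurableSet_Icc).2 hd)

theorem LipschitzOnWith.exists_le_zero_of_ae_deriv_le_neg {f : ℝ → ℝ} {K : NNReal} {δ : ℝ}
    (hf : LipschitzOnWith K f (Ici 0)) (h₀ : 0 ≤ f 0) (hδ : 0 < δ)
    (hd : ∀ᵐ t, 0 ≤ t → 0 < f t → deriv f t ≤ -δ) :
    ∃ s ∈ Icc 0 (f 0 / δ), f s ≤ 0 := by
  by_contra! hpos
  set T := f 0 / δ with hT_def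
  have hT : 0 ≤ T := div_nonneg h₀ hδ.le
  have hac : AbsolutelyContinuousOnInterval f 0 T :=
    (hf.mono (by simp [uIcc_of_le hT, Icc_subset_Ici_self])).absolutelyContinuousOnInterval
  have hdrop : f T - f 0 ≤ -δ * (T - 0) := hac.sub_le_mul_of_ae_deriv_le hT <| by
    filter_upwards [hd] with t ht hmem using ht hmem.1 (hpos t hmem)
  have : δ * T = f 0 := by rw [hT_def]; field_simp
  linarith [hpos T (right_mem_Icc.2 hT)]

theorem add_le_neg_min_of_drift {x₁ x₂ d₁ d₂ σ ρ : ℝ} (hx₁ : 0 ≤ x₁) (hx₂ : 0 ≤ x₂)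
    (hx : 0 < x₁ + x₂) (hboth : 0 < x₁ → 0 < x₂ → d₁ + d₂ ≤ -σ)
    (h₁ : 0 < x₁ → x₂ = 0 → d₁ + d₂ ≤ -ρ) (h₂ : 0 < x₂ → x₁ = 0 → d₁ + d₂ ≤ -ρ) :
    d₁ + d₂ ≤ -min σ ρ := by
  have := min_le_left σ ρ
  have := min_le_right σ ρ
  rcases hx₁.eq_or_lt with e₁ | p₁ <;> rcases hx₂.eq_or_lt with e₂ | p₂
  · linarith
  · linarith [h₂ p₂ e₁.symm]
  · linarith [h₁ p₁ e₂.symm]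
  · linarith [hboth p₁ p₂]

theorem inv_min_le_of_nonneg_add {a m M : ℝ} (ha : 0 < a) (hm : 0 < m) (haM : 0 ≤ a + M)
    (hmM : 0 ≤ m + M) : (min a m)⁻¹ ≤ 1 / a + (1 + M / a) / m := by
  have hB : 1 / a + (1 + M / a) / m = (a + m + M) / (a * m) := by field_simp; ring
  rw [hB, inv_eq_one_div]
  rcases min_cases a m with ⟨h, -⟩ | ⟨h, -⟩ <;>
    rw [h, div_le_div_iff₀ (by positivity) (by positivity)] <;> nlinarith

theorem stmt11_general (lam1 lam2 C12 C1 C2 Cl1 Cl2 Cu1 Cu2 K : ℝ)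
    (n1 n2 : ℝ → ℝ)
    (hLip1 : LipschitzWith (Real.toNNReal K) n1)
    (hLip2 : LipschitzWith (Real.toNNReal K) n2)
    (hnn : ∀ t, 0 ≤ t → 0 ≤ n1 t ∧ 0 ≤ n2 t)
    (hC1lu : Cl1 ≤ Cu1)
    (hsum1 : Cl1 + Cu2 = C12) (hsum2 : Cu1 + Cl2 = C12)
    (hC1l : Cl1 ≤ C1) (hC2l : Cl2 ≤ C2)
    (hstab : lam1 + lam2 < C12) (hs1 : lam1 < C1) (hs2 : lam2 < C2)
    (hstay1 : ∀ s t, 0 ≤ s → s ≤ t → n1 s = 0 → n1 t = 0)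
    (hstay2 : ∀ s t, 0 ≤ s → s ≤ t → n2 s = 0 → n2 t = 0)
    (hdrift : ∀ᵐ t ∂(volume : Measure ℝ), 0 ≤ t →
      DifferentiableAt ℝ n1 t ∧ DifferentiableAt ℝ n2 t ∧
      (0 < n1 t → 0 < n2 t →
        deriv n1 t + deriv n2 t = lam1 + lam2 - C12 ∧
        lam1 - Cu1 ≤ deriv n1 t ∧ lam2 - Cu2 ≤ deriv n2 t) ∧
      (0 < n1 t → n2 t = 0 →
        deriv n1 t + deriv n2 t ≤ max (lam1 - C1) (lam2 - C2)) ∧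
      (0 < n2 t → n1 t = 0 →
        deriv n1 t + deriv n2 t ≤ max (lam1 - C1) (lam2 - C2)) ∧
      (n1 t = 0 → n2 t = 0 → deriv n1 t = 0 ∧ deriv n2 t = 0)) :
    ∀ t,
      (1 / (C12 - lam1 - lam2)
          + (1 + max (lam1 - Cl1) (lam2 - Cl2) / (C12 - lam1 - lam2))
              / min (C1 - lam1) (C2 - lam2)) * (n1 0 + n2 0) ≤ t →
      n1 t = 0 ∧ n2 t = 0 := by
  intro t ht
  set a := C12 - lam1 - lam2
  set m := min (C1 - lam1) (C2 - lam2)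
  set M := max (lam1 - Cl1) (lam2 - Cl2)
  have ha : 0 < a := by linarith
  have hm : 0 < m := lt_min (by linarith) (by linarith)
  have hM₁ : lam1 - Cl1 ≤ M := le_max_left _ _
  have hM₂ : lam2 - Cl2 ≤ M := le_max_right _ _
  have haM : 0 ≤ a + M := by linarith
  have hmM : 0 ≤ m + M := by
    rcases min_cases (C1 - lam1) (C2 - lam2) with ⟨h, -⟩ | ⟨h, -⟩ <;> linarith
  have hsum_drift :
      ∀ᵐ u, 0 ≤ u → 0 < n1 u + n2 u → deriv (fun u ↦ n1 u + n2 u) u ≤ -min a m := by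
    filter_upwards [hdrift] with u hu hu₀ hpos
    obtain ⟨hd₁, hd₂, hboth, h₁, h₂, -⟩ := hu hu₀
    have hmax : max (lam1 - C1) (lam2 - C2) ≤ -m :=
      max_le (by linarith [min_le_left (C1 - lam1) (C2 - lam2)])
        (by linarith [min_le_right (C1 - lam1) (C2 - lam2)])
    rw [deriv_fun_add hd₁ hd₂]
    exact add_le_neg_min_of_drift (hnn u hu₀).1 (hnn u hu₀).2 hpos
      (fun p₁ p₂ ↦ by linarith [(hboth p₁ p₂).1]) (fun p₁ e₂ ↦ (h₁ p₁ e₂).trans hmax)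
      (fun p₂ e₁ ↦ (h₂ p₂ e₁).trans hmax)
  have h₀ : 0 ≤ n1 0 + n2 0 := add_nonneg (hnn 0 le_rfl).1 (hnn 0 le_rfl).2
  obtain ⟨s, ⟨hs₀, hsT⟩, hs⟩ :=
    ((hLip1.add hLip2).lipschitzOnWith (s := Ici 0)).exists_le_zero_of_ae_deriv_le_neg
      h₀ (lt_min ha hm) hsum_drift
  have hst : s ≤ t := calc
    s ≤ (n1 0 + n2 0) / min a m := hsT
    _ = (min a m)⁻¹ * (n1 0 + n2 0) := by rw [div_eq_inv_mul]
    _ ≤ _ := mul_le_mul_of_nonneg_right (inv_min_le_of_nonneg_add ha hm haM hmM) h₀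
    _ ≤ t := ht
  have hn₁ := (hnn s hs₀).1
  have hn₂ := (hnn s hs₀).2
  exact ⟨hstay1 s t hs₀ hst (by linarith), hstay2 s t hs₀ hst (by linarith)⟩

/-- Fluid stability for the W-topology under Max-Weight: under the drift conditions
(i)-(iii), absorption at zero, the derivative lower bounds `λ_i - C̄_i` while both
coordinates are positive, and the stability conditions `λ_1 + λ_2 < C_{1,2}`,
`λ_1 < C_1`, `λ_2 < C_2`, every fluid trajectory reaches `0` by time
`B (n_1(0) + n_2(0))` with
`B = 1/(C_{1,2}-λ_1-λ_2) + (1 + max{λ_1-C̲_1, λ_2-C̲_2}/(C_{1,2}-λ_1-λ_2)) / min{C_1-λ_1, C_2-λ_2}`. -/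
theorem stmt11 (lam1 lam2 C12 C1 C2 Cl1 Cl2 Cu1 Cu2 K : ℝ)
    (n1 n2 : ℝ → ℝ)
    (hLip1 : LipschitzWith (Real.toNNReal K) n1)
    (hLip2 : LipschitzWith (Real.toNNReal K) n2)
    (hnn : ∀ t, 0 ≤ t → 0 ≤ n1 t ∧ 0 ≤ n2 t)
    (hinit : 0 < n1 0 + n2 0)
    (hC1lu : Cl1 ≤ Cu1) (hC2lu : Cl2 ≤ Cu2)
    (hsum1 : Cl1 + Cu2 = C12) (hsum2 : Cu1 + Cl2 = C12)
    (hC1l : Cl1 ≤ C1) (hC2l : Cl2 ≤ C2)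
    (hstab : lam1 + lam2 < C12) (hs1 : lam1 < C1) (hs2 : lam2 < C2)
    (hstay1 : ∀ s t, 0 ≤ s → s ≤ t → n1 s = 0 → n1 t = 0)
    (hstay2 : ∀ s t, 0 ≤ s → s ≤ t → n2 s = 0 → n2 t = 0)
    (hdrift : ∀ᵐ t ∂(volume : Measure ℝ), 0 ≤ t →
      DifferentiableAt ℝ n1 t ∧ DifferentiableAt ℝ n2 t ∧
      (0 < n1 t → 0 < n2 t →
        deriv n1 t + deriv n2 t = lam1 + lam2 - C12 ∧
        lam1 - Cu1 ≤ deriv n1 t ∧ lam2 - Cu2 ≤ deriv n2 t) ∧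
      (0 < n1 t → n2 t = 0 →
        deriv n1 t + deriv n2 t ≤ max (lam1 - C1) (lam2 - C2)) ∧
      (0 < n2 t → n1 t = 0 →
        deriv n1 t + deriv n2 t ≤ max (lam1 - C1) (lam2 - C2)) ∧
      (n1 t = 0 → n2 t = 0 → deriv n1 t = 0 ∧ deriv n2 t = 0)) :
    ∀ t,
      (1 / (C12 - lam1 - lam2)
          + (1 + max (lam1 - Cl1) (lam2 - Cl2) / (C12 - lam1 - lam2))
              / min (C1 - lam1) (C2 - lam2)) * (n1 0 + n2 0) ≤ t →
      n1 t = 0 ∧ n2 t = 0 :=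
  stmt11_general lam1 lam2 C12 C1 C2 Cl1 Cl2 Cu1 Cu2 K n1 n2 hLip1 hLip2 hnn hC1lu hsum1 hsum2 hC1l
    hC2l hstab hs1 hs2 hstay1 hstay2 hdrift
end

section
/- Let f: [0,T] → ℝ be absolutely continuous (hence differentiable a.e.), differentiable at a point t ∈ (0,T) with f(t) = 0, and suppose there is ε > 0 such that, at all points u ∈ (t, t+ε) where f is differentiable, f'(u) ≤ 0 whenever f(u) > 0, and f'(u) ≥ 0 whenever f(u) < 0. Then f'(t) = 0. -/
open MeasureTheory intervalIntegral

/-- Sticky equalization: if `f` is absolutely continuous (it equals the integral of its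
derivative), differentiable a.e. and at `t ∈ (0,T)` with `f(t) = 0`, and on `(t, t+ε)` its
derivative is `≤ 0` wherever `f > 0` and `≥ 0` wherever `f < 0` (at points of
differentiability), then `f'(t) = 0`. -/
theorem stmt12 (T : ℝ) (f : ℝ → ℝ) (t ε : ℝ)
    (hT : 0 < T) (ht : t ∈ Set.Ioo 0 T) (hε : 0 < ε)
    (hcont : ContinuousOn f (Set.Icc 0 T))
    (hae : ∀ᵐ u ∂(volume : Measure ℝ), DifferentiableAt ℝ f u)
    (hAC : ∀ a b : ℝ, a ≤ b → f b - f a = ∫ x in a..b, deriv f x)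
    (hdiff : DifferentiableAt ℝ f t) (hft : f t = 0)
    (hpos : ∀ u ∈ Set.Ioo t (t + ε), DifferentiableAt ℝ f u → 0 < f u → deriv f u ≤ 0)
    (hneg : ∀ u ∈ Set.Ioo t (t + ε), DifferentiableAt ℝ f u → f u < 0 → 0 ≤ deriv f u) :
    deriv f t = 0 := by
  by_contra h
  have hslope : Filter.Tendsto (slope f t) (nhdsWithin t (Set.Ioi t)) (nhds (deriv f t)) := by
    have h1 := hasDerivAt_iff_tendsto_slope.mp hdiff.hasDerivAt
    exact h1.mono_left (nhdsWithin_mono t (fun x hx => ne_of_gt hx))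
  have hmem : ∀ᶠ u in nhdsWithin t (Set.Ioi t), u ∈ Set.Ioo t (t + ε) :=
    Ioo_mem_nhdsGT_of_mem ⟨le_refl t, by linarith⟩
  rcases lt_or_gt_of_ne h with hlt | hgt
  · -- deriv f t < 0 : f < 0 on the right, deriv ≥ 0 a.e. there
    have hsl : ∀ᶠ u in nhdsWithin t (Set.Ioi t), slope f t u < 0 :=
      hslope.eventually (eventually_lt_nhds hlt)
    obtain ⟨u, htu, hsub⟩ := mem_nhdsGT_iff_exists_Ioc_subset.mp (hsl.and hmem)
    have htu' : t < u := htu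
    have fneg : ∀ v ∈ Set.Ioc t u, f v < 0 := by
      intro v hv
      have h1 := (hsub hv).1
      rw [slope_def_field] at h1
      have h2 : 0 < v - t := sub_pos.mpr hv.1
      have h3 : f v - f t < 0 := by
        have := mul_neg_of_neg_of_pos h1 h2
        rwa [div_mul_cancel₀ _ (ne_of_gt h2)] at this
      linarith
    have hfd : ∀ᵐ v ∂(volume.restrict (Set.Ioc t u)), 0 ≤ deriv f v := by
      filter_upwards [ae_restrict_mem measurableSet_Ioc, ae_restrict_of_ae hae] with v hv hdv
      exact hneg v (hsub hv).2 hdv (fneg v hv)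
    have hint : (0:ℝ) ≤ ∫ x in t..u, deriv f x := by
      rw [intervalIntegral.integral_of_le (le_of_lt htu')]
      exact integral_nonneg_of_ae hfd
    have := hAC t u (le_of_lt htu')
    have := fneg u ⟨htu', le_refl u⟩
    linarith
  · -- deriv f t > 0 : f > 0 on the right, deriv ≤ 0 a.e. there
    have hsl : ∀ᶠ u in nhdsWithin t (Set.Ioi t), 0 < slope f t u :=
      hslope.eventually (eventually_gt_nhds hgt)
    obtain ⟨u, htu, hsub⟩ := mem_nhdsGT_iff_exists_Ioc_subset.mp (hsl.and hmem)
    have htu' : t < u := htu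
    have fpos : ∀ v ∈ Set.Ioc t u, 0 < f v := by
      intro v hv
      have h1 := (hsub hv).1
      rw [slope_def_field] at h1
      have h2 : 0 < v - t := sub_pos.mpr hv.1
      have h3 : 0 < f v - f t := by
        have := mul_pos h1 h2
        rwa [div_mul_cancel₀ _ (ne_of_gt h2)] at this
      linarith
    have hfd : ∀ᵐ v ∂(volume.restrict (Set.Ioc t u)), deriv f v ≤ 0 := by
      filter_upwards [ae_restrict_mem measurableSet_Ioc, ae_restrict_of_ae hae] with v hv hdv
      exact hpos v (hsub hv).2 hdv (fpos v hv)
    have hint : (∫ x in t..u, deriv f x) ≤ 0 := by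
      rw [intervalIntegral.integral_of_le (le_of_lt htu')]
      exact integral_nonpos_of_ae hfd
    have := hAC t u (le_of_lt htu')
    have := fpos u ⟨htu', le_refl u⟩
    linarith
end
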